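/- arXiv:1810.09344 — 3 statements merged into one kernel-verified Lean document; each statement's English description precedes it below -/
import Mathlib

section
/- Let V be a real Hilbert space, K a compact subset of V, and let (u^k)_{k≥0} be a weak greedy sequence in K with parameter γ ∈ (0,1]. If for some s > 0 and C0 > 0 the Kolmogorov widths satisfy d_n(K) ≤ C0·(max{1,n})^{-s} for all n ≥ 0, then there exists a constant C1 > 0 depending only on C0, s and γ such that for every ε > 0, the smallest integer n(ε) with σ_{n(ε)}(K) ≤ ε satisfies n(ε) ≤ C1·ε^{-1/s}. -/
/-- The Kolmogorov `n`-width of a set `K` in a real inner product space: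
the infimum over all subspaces `E` of dimension at most `n` of the worst-case
distance `‖u - P_E u‖ = infDist u E` over `u ∈ K`. -/
noncomputable def kolWidth {V : Type*} [NormedAddCommGroup V] [InnerProductSpace ℝ V]
    (K : Set V) (n : ℕ) : ℝ :=
  ⨅ E : {E : Submodule ℝ V // Module.rank ℝ E ≤ (n : Cardinal)},
    ⨆ u ∈ K, Metric.infDist u (E.1 : Set V)

/-- The greedy error `σ_n(K) = sup_{x ∈ K} ‖x - P_{V_n} x‖` where
`V_n = span{u^0, …, u^{n-1}}`. -/
noncomputable def greedyErr {V : Type*} [NormedAddCommGroup V] [InnerProductSpace ℝ V]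
    (u : ℕ → V) (K : Set V) (n : ℕ) : ℝ :=
  ⨆ x ∈ K, Metric.infDist x (Submodule.span ℝ (u '' Set.Iio n) : Set V)

/-- `u` is a weak greedy sequence for `K` with parameter `γ`:
`‖u^n - P_{V_n} u^n‖ ≥ γ · σ_n(K)` for all `n`. -/
def IsWeakGreedy {V : Type*} [NormedAddCommGroup V] [InnerProductSpace ℝ V]
    (u : ℕ → V) (K : Set V) (γ : ℝ) : Prop :=
  ∀ n : ℕ, γ * greedyErr u K n ≤
    Metric.infDist (u n) (Submodule.span ℝ (u '' Set.Iio n) : Set V)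

universe u

namespace GreedyRate

open Metric Submodule

set_option linter.unusedSectionVars false

variable {V : Type*} [NormedAddCommGroup V] [InnerProductSpace ℝ V] [CompleteSpace V]

local notation "⟪" x ", " y "⟫" => @inner ℝ _ _ x y

/-- infDist to a complete submodule equals the norm of the residual of the
orthogonal projection. -/
lemma infDist_eq_norm_sub_proj (U : Submodule ℝ V) [HasOrthogonalProjection U] (x : V) :
    Metric.infDist x (U : Set V) = ‖x - (orthogonalProjection U x : V)‖ := by
  apply le_antisymm
  · have := Metric.infDist_le_dist_of_mem
      (x := x) (SetLike.mem_coe.mpr (orthogonalProjection U x).2)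
    simpa [dist_eq_norm] using this
  · rw [Metric.infDist_eq_iInf]
    haveI : Nonempty (U : Set V) := ⟨⟨0, SetLike.mem_coe.mpr (zero_mem U)⟩⟩
    apply le_ciInf
    rintro ⟨y, hy'⟩
    have hy : y ∈ U := SetLike.mem_coe.mp hy'
    simp only [dist_eq_norm]
    have horth : ⟪x - (orthogonalProjection U x : V), (orthogonalProjection U x : V) - y⟫ = 0 := by
      have h1 : x - (orthogonalProjection U x : V) ∈ Uᗮ :=
        Submodule.sub_starProjection_mem_orthogonal x
      have h2 : (orthogonalProjection U x : V) - y ∈ U :=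
        sub_mem (orthogonalProjection U x).2 hy
      exact (Submodule.mem_orthogonal' U _).1 h1 _ h2
    have hdecomp : x - y = (x - (orthogonalProjection U x : V)) +
        ((orthogonalProjection U x : V) - y) := by abel
    have hnorm : ‖x - y‖ ^ 2 = ‖x - (orthogonalProjection U x : V)‖ ^ 2 +
        ‖(orthogonalProjection U x : V) - y‖ ^ 2 := by
      rw [hdecomp, norm_add_sq_real, horth]; ring
    nlinarith [norm_nonneg (x - y), norm_nonneg (x - (orthogonalProjection U x : V)),
      sq_nonneg ‖(orthogonalProjection U x : V) - y‖]

lemma norm_sub_proj_le (U : Submodule ℝ V) [HasOrthogonalProjection U] (x : V) :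
    ‖x - (orthogonalProjection U x : V)‖ ≤ ‖x‖ := by
  rw [← infDist_eq_norm_sub_proj]
  have := Metric.infDist_le_dist_of_mem (x := x) (SetLike.mem_coe.mpr (zero_mem U))
  simpa [dist_eq_norm] using this

lemma le_biSup_infDist {K S : Set V} {R : ℝ}
    (hR : ∀ y ∈ K, Metric.infDist y S ≤ R) {x : V} (hx : x ∈ K) :
    Metric.infDist x S ≤ ⨆ y ∈ K, Metric.infDist y S := by
  have hb : BddAbove (Set.range fun y => ⨆ _ : y ∈ K, Metric.infDist y S) := by
    refine ⟨max R 0, ?_⟩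
    rintro _ ⟨y, rfl⟩
    dsimp only
    by_cases hy : y ∈ K
    · haveI : Nonempty (y ∈ K) := ⟨hy⟩
      rw [ciSup_const]
      exact le_max_of_le_left (hR y hy)
    · haveI : IsEmpty (y ∈ K) := ⟨fun h => hy h⟩
      rw [Real.iSup_of_isEmpty]
      exact le_max_right _ _
  haveI : Nonempty (x ∈ K) := ⟨hx⟩
  calc Metric.infDist x S = ⨆ _ : x ∈ K, Metric.infDist x S := (ciSup_const).symm
    _ ≤ _ := le_ciSup hb x

lemma biSup_infDist_le {K S : Set V} {b : ℝ} (hb : 0 ≤ b)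
    (h : ∀ x ∈ K, Metric.infDist x S ≤ b) :
    (⨆ x ∈ K, Metric.infDist x S) ≤ b :=
  Real.iSup_le (fun x => Real.iSup_le (fun hx => h x hx) hb) hb

lemma biSup_infDist_nonneg {K S : Set V} : 0 ≤ ⨆ x ∈ K, Metric.infDist x S :=
  Real.iSup_nonneg fun _ => Real.iSup_nonneg fun _ => Metric.infDist_nonneg

lemma greedyErr_nonneg (u : ℕ → V) (K : Set V) (n : ℕ) : 0 ≤ greedyErr u K n :=
  biSup_infDist_nonneg

lemma span_mono_le (u : ℕ → V) {a b : ℕ} (hab : a ≤ b) :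
    Submodule.span ℝ (u '' Set.Iio a) ≤ Submodule.span ℝ (u '' Set.Iio b) :=
  Submodule.span_mono (Set.image_mono (Set.Iio_subset_Iio hab))

lemma infDist_span_le_norm (u : ℕ → V) (n : ℕ) (x : V) :
    Metric.infDist x (Submodule.span ℝ (u '' Set.Iio n) : Set V) ≤ ‖x‖ := by
  have := Metric.infDist_le_dist_of_mem
    (x := x) (SetLike.mem_coe.mpr (zero_mem (Submodule.span ℝ (u '' Set.Iio n))))
  simpa [dist_eq_norm] using this

lemma infDist_le_greedyErr {K : Set V} {R : ℝ} (hR : ∀ y ∈ K, ‖y‖ ≤ R)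
    (u : ℕ → V) (n : ℕ) {x : V} (hx : x ∈ K) :
    Metric.infDist x (Submodule.span ℝ (u '' Set.Iio n) : Set V) ≤ greedyErr u K n :=
  le_biSup_infDist (fun y hy => (infDist_span_le_norm u n y).trans (hR y hy)) hx

lemma greedyErr_antitone {K : Set V} {R : ℝ} (hR : ∀ y ∈ K, ‖y‖ ≤ R)
    (u : ℕ → V) {a b : ℕ} (hab : a ≤ b) :
    greedyErr u K b ≤ greedyErr u K a := by
  apply biSup_infDist_le (greedyErr_nonneg u K a)
  intro x hx
  calc Metric.infDist x (Submodule.span ℝ (u '' Set.Iio b) : Set V)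
      ≤ Metric.infDist x (Submodule.span ℝ (u '' Set.Iio a) : Set V) :=
        Metric.infDist_le_infDist_of_subset (span_mono_le u hab)
          ⟨0, SetLike.mem_coe.mpr (zero_mem _)⟩
    _ ≤ greedyErr u K a := infDist_le_greedyErr hR u a hx

lemma rpow_anti {a b : ℝ} (ha : 0 < a) (hab : a ≤ b) {t : ℝ} (ht : 0 ≤ t) :
    b ^ (-t) ≤ a ^ (-t) := by
  have hb : 0 < b := lt_of_lt_of_le ha hab
  rw [Real.rpow_neg hb.le, Real.rpow_neg ha.le]
  exact inv_anti₀ (Real.rpow_pos_of_pos ha t) (Real.rpow_le_rpow ha.le hab ht)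

instance fdSpan (u : ℕ → V) (n : ℕ) :
    FiniteDimensional ℝ (Submodule.span ℝ (u '' Set.Iio n)) :=
  FiniteDimensional.span_of_finite ℝ ((Set.finite_Iio n).image u)

instance hasProjOfFD (U : Submodule ℝ V) [FiniteDimensional ℝ U] : HasOrthogonalProjection U :=
  haveI : CompleteSpace U := FiniteDimensional.complete ℝ U
  inferInstance

set_option maxHeartbeats 1000000 in
set_option synthInstance.maxHeartbeats 400000 in
lemma key_flatness {K : Set V} (u : ℕ → V) (hu : ∀ n, u n ∈ K) {γ : ℝ}
    (hγ0 : 0 < γ) (hwg : IsWeakGreedy u K γ) {R : ℝ} (hR : ∀ y ∈ K, ‖y‖ ≤ R)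
    (N m L : ℕ) (hm : 1 ≤ m) (hL : 1 ≤ L)
    (E : Submodule ℝ V) (hEr : Module.rank ℝ E ≤ (m : Cardinal))
    {d : ℝ} (hd : 0 < d) (hE : ∀ x ∈ K, Metric.infDist x (E : Set V) < d) :
    γ * greedyErr u K (N + L * m) ≤ greedyErr u K N / Real.sqrt L + 2 * d := by
  have hσN : 0 ≤ greedyErr u K N := greedyErr_nonneg u K N
  have hsqrtL : (1:ℝ) ≤ Real.sqrt L := by
    rw [show (1:ℝ) = Real.sqrt 1 by simp]
    exact Real.sqrt_le_sqrt (by exact_mod_cast hL)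
  have hsqrtLpos : 0 < Real.sqrt L := lt_of_lt_of_le one_pos hsqrtL
  by_cases hpos : greedyErr u K (N + L * m) ≤ 0
  · have h1 : γ * greedyErr u K (N + L * m) ≤ 0 := mul_nonpos_iff.mpr (Or.inl ⟨hγ0.le, hpos⟩)
    have h2 : 0 ≤ greedyErr u K N / Real.sqrt L := div_nonneg hσN hsqrtLpos.le
    linarith
  push_neg at hpos
  haveI hEfd : FiniteDimensional ℝ E :=
    Module.rank_lt_aleph0_iff.mp (lt_of_le_of_lt hEr (Cardinal.nat_lt_aleph0 m))
  set Vn : ℕ → Submodule ℝ V := fun i => Submodule.span ℝ (u '' Set.Iio i) with hVn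
  set r : ℕ → V := fun i => u i - (orthogonalProjection (Vn i) (u i) : V) with hrdef
  have hrnorm : ∀ i, ‖r i‖ = Metric.infDist (u i) ((Vn i : Set V)) := fun i =>
    (infDist_eq_norm_sub_proj (Vn i) (u i)).symm
  have hgreedy : ∀ i, γ * greedyErr u K i ≤ ‖r i‖ := fun i => by
    rw [hrnorm]; exact hwg i
  have hrmemO : ∀ i, r i ∈ (Vn i)ᗮ := fun i => Submodule.sub_starProjection_mem_orthogonal _
  have hrmem : ∀ i, r i ∈ Vn (i+1) := by
    intro i
    apply sub_mem
    · exact Submodule.subset_span ⟨i, by simp, rfl⟩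
    · exact span_mono_le u (Nat.le_succ i) (orthogonalProjection (Vn i) (u i)).2
  have hrorth : ∀ i j, i < j → ⟪r i, r j⟫ = 0 := by
    intro i j hij
    have h1 : r i ∈ Vn j := span_mono_le u hij (hrmem i)
    exact (Submodule.mem_orthogonal (Vn j) (r j)).mp (hrmemO j) _ h1
  have hrpos : ∀ i, i < N + L * m → 0 < ‖r i‖ := by
    intro i hi
    have h1 : greedyErr u K (N + L * m) ≤ greedyErr u K i := greedyErr_antitone hR u hi.le
    calc (0:ℝ) < γ * greedyErr u K (N + L*m) := mul_pos hγ0 hpos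
      _ ≤ γ * greedyErr u K i := by nlinarith
      _ ≤ ‖r i‖ := hgreedy i
  set ξ : ℕ → V := fun i => ‖r i‖⁻¹ • r i with hξdef
  have hξnorm : ∀ i, i < N + L*m → ‖ξ i‖ = 1 := by
    intro i hi
    rw [hξdef]
    simp only [norm_smul, norm_inv, norm_norm]
    exact inv_mul_cancel₀ (ne_of_gt (hrpos i hi))
  have hLm0 : 0 < L * m := Nat.mul_pos hL hm
  have hξorth : ∀ i j, i ≠ j → ⟪ξ i, ξ j⟫ = 0 := by
    intro i j hij
    have key : ∀ a b : ℕ, a < b → ⟪ξ a, ξ b⟫ = 0 := by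
      intro a b hab
      rw [hξdef]
      simp only [real_inner_smul_left, real_inner_smul_right]
      rw [hrorth a b hab]
      ring
    rcases lt_or_gt_of_ne hij with h | h
    · exact key _ _ h
    · rw [real_inner_comm]; exact key _ _ h
  have hON : Orthonormal ℝ (fun k : Fin (L * m) => ξ (N + (k:ℕ))) := by
    constructor
    · intro k
      exact hξnorm _ (by have := k.2; omega)
    · intro k k' hkk'
      exact hξorth _ _ (by
        intro hc
        exact hkk' (Fin.ext (by omega)))
  set Q : V →ₗ[ℝ] V :=
    LinearMap.id - (Vn N).subtype ∘ₗ (orthogonalProjection (Vn N)).toLinearMap with hQ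
  have hQapply : ∀ x, Q x = x - (orthogonalProjection (Vn N) x : V) := fun x => rfl
  have hQnorm : ∀ x, ‖Q x‖ ≤ ‖x‖ := fun x => by
    rw [hQapply]; exact norm_sub_proj_le _ _
  set F : Submodule ℝ V := E.map Q with hF
  have hFrank : Module.finrank ℝ F ≤ m := by
    apply Module.finrank_le_of_rank_le
    exact le_trans (rank_map_le Q E) hEr
  set b := stdOrthonormalBasis ℝ F with hbdef
  set c : Fin (L*m) → ℝ := fun k => ∑ j, (⟪((b j : F) : V), ξ (N + (k:ℕ))⟫)^2 with hc
  have hbnorm : ∀ j, ‖((b j : F) : V)‖ = 1 := by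
    intro j
    rw [Submodule.norm_coe]
    exact b.orthonormal.1 j
  have hcsum : ∑ k, c k ≤ (m:ℝ) := by
    rw [hc, Finset.sum_comm]
    have hb1 : ∀ j, (∑ k : Fin (L*m), (⟪((b j : F) : V), ξ (N + (k:ℕ))⟫)^2) ≤ 1 := by
      intro j
      have hB := hON.sum_inner_products_le (𝕜 := ℝ) ((b j : F) : V) (s := Finset.univ)
      have : ∀ k : Fin (L*m), ‖⟪ξ (N + (k:ℕ)), ((b j : F) : V)⟫‖^2
          = (⟪((b j : F) : V), ξ (N + (k:ℕ))⟫)^2 := by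
        intro k
        rw [Real.norm_eq_abs, sq_abs, real_inner_comm]
      rw [Finset.sum_congr rfl (fun k _ => this k)] at hB
      calc (∑ k : Fin (L*m), (⟪((b j : F) : V), ξ (N + (k:ℕ))⟫)^2)
          ≤ ‖((b j : F) : V)‖^2 := hB
        _ = 1 := by rw [hbnorm j]; norm_num
    calc (∑ j, ∑ k : Fin (L*m), (⟪((b j : F) : V), ξ (N + (k:ℕ))⟫)^2)
        ≤ ∑ _j : Fin (Module.finrank ℝ F), (1:ℝ) := Finset.sum_le_sum (fun j _ => hb1 j)
      _ = (Module.finrank ℝ F : ℝ) := by simp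
      _ ≤ (m:ℝ) := by exact_mod_cast hFrank
  have hpigeon : ∃ k : Fin (L*m), c k ≤ 1 / (L:ℝ) := by
    by_contra hcon
    push_neg at hcon
    haveI : Nonempty (Fin (L*m)) := ⟨⟨0, hLm0⟩⟩
    have h2 : ∑ _k : Fin (L*m), (1/(L:ℝ)) < ∑ k, c k :=
      Finset.sum_lt_sum_of_nonempty Finset.univ_nonempty (fun k _ => hcon k)
    have h3 : ∑ _k : Fin (L*m), (1/(L:ℝ)) = (m:ℝ) := by
      rw [Finset.sum_const, Finset.card_univ, Fintype.card_fin, nsmul_eq_mul]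
      have hLne : (L:ℝ) ≠ 0 := by positivity
      push_cast
      field_simp
    rw [h3] at h2
    linarith
  obtain ⟨k, hk⟩ := hpigeon
  set i := N + (k:ℕ) with hidef
  have hilt : i < N + L*m := by
    have := k.2
    omega
  have hξON : ξ i ∈ (Vn N)ᗮ := by
    have h1 : ξ i ∈ (Vn i)ᗮ := Submodule.smul_mem _ _ (hrmemO i)
    exact Submodule.orthogonal_le (span_mono_le u (Nat.le_add_right N _)) h1
  have hinner_ri : ⟪ξ i, u i⟫ = ‖r i‖ := by
    have hdecomp : (u i : V) = r i + (orthogonalProjection (Vn i) (u i) : V) := by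
      rw [hrdef]; simp
    rw [hdecomp, inner_add_right]
    have h1 : ⟪ξ i, (orthogonalProjection (Vn i) (u i) : V)⟫ = 0 := by
      have hmem : ξ i ∈ (Vn i)ᗮ := Submodule.smul_mem _ _ (hrmemO i)
      exact (Submodule.mem_orthogonal' (Vn i) (ξ i)).mp hmem _
        (orthogonalProjection (Vn i) (u i)).2
    have h2 : ⟪ξ i, r i⟫ = ‖r i‖ := by
      rw [hξdef]
      simp only [real_inner_smul_left]
      rw [real_inner_self_eq_norm_sq]
      have := hrpos i hilt
      field_simp
    rw [h1, h2, add_zero]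
  have step1 : γ * greedyErr u K (N + L*m) ≤ ⟪ξ i, u i⟫ := by
    rw [hinner_ri]
    calc γ * greedyErr u K (N + L*m) ≤ γ * greedyErr u K i := by
          have := greedyErr_antitone hR u hilt.le
          nlinarith
      _ ≤ ‖r i‖ := hgreedy i
  set w := Q (u i) with hwdef
  have hwnorm : ‖w‖ ≤ greedyErr u K N := by
    rw [hwdef, hQapply, ← infDist_eq_norm_sub_proj]
    exact infDist_le_greedyErr hR u N (hu i)
  have hwinner : ⟪ξ i, u i⟫ = ⟪ξ i, w⟫ := by
    rw [hwdef, hQapply, inner_sub_right]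
    have h1 : ⟪ξ i, (orthogonalProjection (Vn N) (u i) : V)⟫ = 0 :=
      (Submodule.mem_orthogonal' (Vn N) (ξ i)).mp hξON _
        (orthogonalProjection (Vn N) (u i)).2
    rw [h1, sub_zero]
  obtain ⟨e, heE, hedist⟩ :=
    (Metric.infDist_lt_iff ⟨0, SetLike.mem_coe.mpr (zero_mem E)⟩).mp (hE (u i) (hu i))
  set e' := Q e with he'def
  have he'F : e' ∈ F := Submodule.mem_map_of_mem (SetLike.mem_coe.mp heE)
  have hwe' : ‖w - e'‖ < d := by
    rw [hwdef, he'def, ← map_sub]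
    calc ‖Q (u i - e)‖ ≤ ‖u i - e‖ := hQnorm _
      _ = dist (u i) e := (dist_eq_norm _ _).symm
      _ < d := hedist
  have he'norm : ‖e'‖ ≤ greedyErr u K N + d := by
    have h1 : e' = w - (w - e') := by abel
    calc ‖e'‖ = ‖w - (w - e')‖ := by rw [← h1]
      _ ≤ ‖w‖ + ‖w - e'‖ := norm_sub_le _ _
      _ ≤ greedyErr u K N + d := add_le_add hwnorm hwe'.le
  set e'' : F := ⟨e', he'F⟩ with he''def
  have hsumrepr : (e' : V) = ∑ j, b.repr e'' j • ((b j : F) : V) := by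
    have h1 := b.sum_repr e''
    calc e' = ((e'' : F) : V) := rfl
      _ = ((∑ j, b.repr e'' j • b j : F) : V) := by rw [h1]
      _ = ∑ j, b.repr e'' j • ((b j : F) : V) := by
          rw [Submodule.coe_sum]
          simp
  have hinner1 : ⟪ξ i, e'⟫ = ∑ j, b.repr e'' j * ⟪ξ i, ((b j : F) : V)⟫ := by
    rw [hsumrepr, inner_sum]
    simp [real_inner_smul_right]
  have hreprsq : ∑ j, (b.repr e'' j)^2 = ‖e'‖^2 := by
    have h1 : ‖b.repr e''‖ = ‖e''‖ := b.repr.norm_map e''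
    have h2 : ‖e''‖ = ‖e'‖ := rfl
    rw [EuclideanSpace.norm_eq] at h1
    have h3 : ∀ j, ‖b.repr e'' j‖^2 = (b.repr e'' j)^2 := fun j => by
      rw [Real.norm_eq_abs, sq_abs]
    have h4 : Real.sqrt (∑ j, (b.repr e'' j)^2) = ‖e'‖ := by
      rw [← h2, ← h1]
      congr 1
      exact Finset.sum_congr rfl (fun j _ => (h3 j).symm)
    have h5 : 0 ≤ ∑ j, (b.repr e'' j)^2 :=
      Finset.sum_nonneg (fun j _ => sq_nonneg _)
    rw [← h4, Real.sq_sqrt h5]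
  have hCS : ⟪ξ i, e'⟫ ≤ ‖e'‖ * Real.sqrt (c k) := by
    rw [hinner1]
    have hcs := Finset.sum_mul_sq_le_sq_mul_sq Finset.univ
      (fun j => b.repr e'' j) (fun j => ⟪ξ i, ((b j : F) : V)⟫)
    have hck : (∑ j, (⟪ξ i, ((b j : F) : V)⟫)^2) = c k := by
      rw [hc]
      exact Finset.sum_congr rfl (fun j _ => by rw [real_inner_comm])
    calc (∑ j, b.repr e'' j * ⟪ξ i, ((b j : F) : V)⟫)
        ≤ |∑ j, b.repr e'' j * ⟪ξ i, ((b j : F) : V)⟫| := le_abs_self _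
      _ = Real.sqrt ((∑ j, b.repr e'' j * ⟪ξ i, ((b j : F) : V)⟫)^2) :=
          (Real.sqrt_sq_eq_abs _).symm
      _ ≤ Real.sqrt ((∑ j, (b.repr e'' j)^2) * (∑ j, (⟪ξ i, ((b j : F) : V)⟫)^2)) :=
          Real.sqrt_le_sqrt hcs
      _ = ‖e'‖ * Real.sqrt (c k) := by
          rw [hreprsq, hck, Real.sqrt_mul (sq_nonneg _), Real.sqrt_sq (norm_nonneg _)]
  have hsqrtck : Real.sqrt (c k) ≤ 1 / Real.sqrt L := by
    calc Real.sqrt (c k) ≤ Real.sqrt (1/(L:ℝ)) := Real.sqrt_le_sqrt hk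
      _ = 1 / Real.sqrt L := by
          rw [one_div, Real.sqrt_inv, one_div]
  have hcknn : 0 ≤ Real.sqrt (c k) := Real.sqrt_nonneg _
  have hinner2 : ⟪ξ i, w - e'⟫ ≤ d := by
    calc ⟪ξ i, w - e'⟫ ≤ ‖ξ i‖ * ‖w - e'‖ := real_inner_le_norm _ _
      _ = ‖w - e'‖ := by rw [hξnorm i hilt, one_mul]
      _ ≤ d := hwe'.le
  have hsplit : ⟪ξ i, w⟫ = ⟪ξ i, e'⟫ + ⟪ξ i, w - e'⟫ := by
    rw [← inner_add_right]
    congr 1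
    abel
  have hfinal : γ * greedyErr u K (N + L*m) ≤
      (greedyErr u K N + d) * (1/Real.sqrt L) + d := by
    calc γ * greedyErr u K (N + L*m) ≤ ⟪ξ i, u i⟫ := step1
      _ = ⟪ξ i, w⟫ := hwinner
      _ = ⟪ξ i, e'⟫ + ⟪ξ i, w - e'⟫ := hsplit
      _ ≤ ‖e'‖ * Real.sqrt (c k) + d := add_le_add hCS hinner2
      _ ≤ (greedyErr u K N + d) * (1/Real.sqrt L) + d := by
          have hm1 : ‖e'‖ * Real.sqrt (c k) ≤ (greedyErr u K N + d) * (1/Real.sqrt L) :=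
            mul_le_mul he'norm hsqrtck hcknn (by linarith)
          linarith
  have harith : (greedyErr u K N + d) * (1/Real.sqrt L)
      ≤ greedyErr u K N / Real.sqrt L + d := by
    have h1 : d * (1/Real.sqrt L) ≤ d := by
      rw [mul_one_div]
      exact div_le_self hd.le hsqrtL
    have h2 : (greedyErr u K N + d) * (1/Real.sqrt L)
        = greedyErr u K N / Real.sqrt L + d * (1/Real.sqrt L) := by
      field_simp
    linarith
  linarith


lemma infDist_submodule_le_norm (U : Submodule ℝ V) (x : V) :
    Metric.infDist x (U : Set V) ≤ ‖x‖ := by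
  have := Metric.infDist_le_dist_of_mem (x := x) (SetLike.mem_coe.mpr (zero_mem U))
  simpa [dist_eq_norm] using this

lemma norm_le_of_kolWidth_zero {K : Set V} (hK : IsCompact K) {C : ℝ}
    (h : kolWidth K 0 ≤ C) : ∀ x ∈ K, ‖x‖ ≤ C := by
  obtain ⟨R, hRb⟩ := isBounded_iff_forall_norm_le.mp hK.isBounded
  intro x hx
  have hbot : ∀ E : {E : Submodule ℝ V // Module.rank ℝ E ≤ ((0:ℕ) : Cardinal)},
      E.1 = (⊥ : Submodule ℝ V) := by
    intro E
    have h0 : Module.rank ℝ E.1 = 0 := le_antisymm (by simpa using E.2) (by simp)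
    exact Submodule.rank_eq_zero.mp h0
  have hle : (⨆ y ∈ K, Metric.infDist y ((⊥ : Submodule ℝ V) : Set V)) ≤ kolWidth K 0 := by
    haveI : Nonempty {E : Submodule ℝ V // Module.rank ℝ E ≤ ((0:ℕ) : Cardinal)} :=
      ⟨⟨⊥, by simp [rank_bot]⟩⟩
    apply le_ciInf (f := fun E : {E : Submodule ℝ V // Module.rank ℝ E ≤ ((0:ℕ) : Cardinal)} =>
      ⨆ y ∈ K, Metric.infDist y (E.1 : Set V))
    intro E
    rw [hbot E]
  have h1 : ‖x‖ ≤ ⨆ y ∈ K, Metric.infDist y ((⊥ : Submodule ℝ V) : Set V) := by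
    have h2 := le_biSup_infDist (K := K) (S := ((⊥ : Submodule ℝ V) : Set V)) (R := R)
      (fun y hy => (infDist_submodule_le_norm _ y).trans (hRb y hy)) hx
    have h3 : Metric.infDist x ((⊥ : Submodule ℝ V) : Set V) = ‖x‖ := by
      rw [Submodule.bot_coe, Metric.infDist_singleton, dist_zero_right]
    rwa [h3] at h2
  have h4 : kolWidth K 0 ≤ C := by simpa using h
  calc ‖x‖ ≤ _ := h1
    _ ≤ kolWidth K 0 := hle
    _ ≤ C := h4

lemma exists_approx (K : Set V) {R : ℝ} (hRb : ∀ y ∈ K, ‖y‖ ≤ R) (n : ℕ) {a : ℝ}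
    (ha : kolWidth K n < a) :
    ∃ E : Submodule ℝ V, Module.rank ℝ E ≤ (n : Cardinal) ∧
      ∀ x ∈ K, Metric.infDist x (E : Set V) < a := by
  haveI : Nonempty {E : Submodule ℝ V // Module.rank ℝ E ≤ (n : Cardinal)} :=
    ⟨⟨⊥, by simp⟩⟩
  obtain ⟨E, hE⟩ := exists_lt_of_ciInf_lt ha
  refine ⟨E.1, E.2, fun x hx => lt_of_le_of_lt ?_ hE⟩
  exact le_biSup_infDist (fun y hy => (infDist_submodule_le_norm _ y).trans (hRb y hy)) hx


end GreedyRate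

set_option maxHeartbeats 4000000 in
set_option synthInstance.maxHeartbeats 400000 in
theorem statement3 (C0 s γ : ℝ) (hC0 : 0 < C0) (hs : 0 < s) (hγ : γ ∈ Set.Ioc (0 : ℝ) 1) :
    ∃ C1 : ℝ, 0 < C1 ∧
      ∀ (V : Type u) [NormedAddCommGroup V] [InnerProductSpace ℝ V] [CompleteSpace V]
        (K : Set V), IsCompact K →
        ∀ u : ℕ → V, (∀ n, u n ∈ K) → IsWeakGreedy u K γ →
        (∀ n : ℕ, kolWidth K n ≤ C0 * (max 1 (n : ℝ)) ^ (-s)) →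
        ∀ ε : ℝ, 0 < ε →
          {n : ℕ | greedyErr u K n ≤ ε}.Nonempty ∧
          ((sInf {n : ℕ | greedyErr u K n ≤ ε} : ℕ) : ℝ) ≤ C1 * ε ^ (-1 / s) := by
  classical
  open GreedyRate in
  obtain ⟨hγ0, hγ1⟩ := hγ
  set L : ℕ := max 1 ⌈((2:ℝ)^(s+1)/γ)^2⌉₊ with hLdef
  have hL1 : 1 ≤ L := le_max_left _ _
  have hLR1 : (1:ℝ) ≤ (L:ℝ) := by exact_mod_cast hL1
  have hLsqrt : (2:ℝ)^(s+1)/γ ≤ Real.sqrt L := by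
    have h0 : (0:ℝ) ≤ (2:ℝ)^(s+1)/γ := by positivity
    apply (Real.le_sqrt h0 (by positivity)).mpr
    calc ((2:ℝ)^(s+1)/γ)^2 ≤ (⌈((2:ℝ)^(s+1)/γ)^2⌉₊ : ℝ) := Nat.le_ceil _
      _ ≤ (L:ℝ) := by exact_mod_cast le_max_right 1 _
  set B : ℝ := (4*C0/γ) * (4*(L:ℝ))^s with hBdef
  have h4L1 : (1:ℝ) ≤ (4*(L:ℝ))^s := Real.one_le_rpow (by linarith) hs.le
  have h4Lpos : (0:ℝ) < 4*(L:ℝ) := by linarith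
  have hBpos : 0 < B := by
    have : (0:ℝ) < 4*C0/γ := by positivity
    nlinarith
  have hC0B : C0 ≤ B := by
    have h5 : C0 ≤ 4*C0/γ := by
      rw [le_div_iff₀ hγ0]; nlinarith
    nlinarith [h5, h4L1, (by positivity : (0:ℝ) < 4*C0/γ)]
  refine ⟨2 * B^(1/s), by positivity, ?_⟩
  intro V _ _ _ K hK u hu hwg hw ε hε
  have hKb : ∀ x ∈ K, ‖x‖ ≤ C0 :=
    GreedyRate.norm_le_of_kolWidth_zero hK (by simpa using hw 0)
  have hσ0 : greedyErr u K 0 ≤ C0 :=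
    GreedyRate.biSup_infDist_le hC0.le
      (fun x hx => (GreedyRate.infDist_submodule_le_norm _ x).trans (hKb x hx))
  have hσnn : ∀ n, 0 ≤ greedyErr u K n := GreedyRate.greedyErr_nonneg u K
  -- the recursion inequality
  have hrec : ∀ N m : ℕ, 1 ≤ m → greedyErr u K (N + L*m) ≤
      (2:ℝ)^(-(s+1)) * greedyErr u K N + (2*C0/γ)*(m:ℝ)^(-s) := by
    intro N m hm
    have hmR : (1:ℝ) ≤ (m:ℝ) := by exact_mod_cast hm
    have hwidth : kolWidth K m ≤ C0 * (m:ℝ)^(-s) := by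
      have := hw m
      rwa [max_eq_right hmR] at this
    have hmrs : (0:ℝ) < (m:ℝ)^(-s) := Real.rpow_pos_of_pos (by linarith) _
    have hkey : ∀ δ : ℝ, 0 < δ → γ * greedyErr u K (N + L*m) ≤
        greedyErr u K N / Real.sqrt L + 2*(C0*(m:ℝ)^(-s) + δ) := by
      intro δ hδ
      have hlt : kolWidth K m < C0*(m:ℝ)^(-s) + δ := lt_of_le_of_lt hwidth (by linarith)
      obtain ⟨E, hEr, hEa⟩ := GreedyRate.exists_approx K hKb m hlt
      exact GreedyRate.key_flatness u hu hγ0 hwg hKb N m L hm hL1 E hEr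
        (by positivity) hEa
    have hkey2 : γ * greedyErr u K (N + L*m) ≤
        greedyErr u K N / Real.sqrt L + 2*(C0*(m:ℝ)^(-s)) := by
      by_contra hcon
      push_neg at hcon
      set g := γ * greedyErr u K (N + L*m) -
        (greedyErr u K N / Real.sqrt L + 2*(C0*(m:ℝ)^(-s))) with hg
      have hgpos : 0 < g := by rw [hg]; linarith
      have := hkey (g/4) (by linarith)
      rw [hg] at this
      linarith
    have hsLp : (0:ℝ) < Real.sqrt L := Real.sqrt_pos.mpr (by linarith)
    have hγL : (2:ℝ)^(s+1) ≤ γ * Real.sqrt L := by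
      have h2 : γ*((2:ℝ)^(s+1)/γ) = (2:ℝ)^(s+1) := by field_simp
      nlinarith [hLsqrt, hγ0]
    have h2s1 : (0:ℝ) < (2:ℝ)^(s+1) := Real.rpow_pos_of_pos (by norm_num) _
    have hid : γ * (greedyErr u K N / (γ*Real.sqrt L) + (2*C0/γ)*(m:ℝ)^(-s))
        = greedyErr u K N / Real.sqrt L + 2*(C0*(m:ℝ)^(-s)) := by
      field_simp
    have hstep : greedyErr u K (N + L*m) ≤
        greedyErr u K N / (γ * Real.sqrt L) + (2*C0/γ)*(m:ℝ)^(-s) := by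
      have h := hkey2
      rw [← hid] at h
      exact le_of_mul_le_mul_left h hγ0
    have hdd : greedyErr u K N / (γ*Real.sqrt L) ≤ (2:ℝ)^(-(s+1)) * greedyErr u K N := by
      have hd1 : greedyErr u K N / (γ*Real.sqrt L) ≤ greedyErr u K N / (2:ℝ)^(s+1) :=
        div_le_div_of_nonneg_left (hσnn N) h2s1 hγL
      have hd2 : greedyErr u K N / (2:ℝ)^(s+1) = (2:ℝ)^(-(s+1)) * greedyErr u K N := by
        rw [Real.rpow_neg (by norm_num : (0:ℝ) ≤ 2), div_eq_inv_mul]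
      linarith
    linarith [hstep, hdd]
  -- the polynomial rate for the greedy errors
  have hrate : ∀ n : ℕ, greedyErr u K n ≤ B * (max 1 (n:ℝ))^(-s) := by
    intro n
    induction n using Nat.strong_induction_on with
    | _ n ih =>
      by_cases hn : n < 4*L
      · have h1 : greedyErr u K n ≤ C0 :=
          (GreedyRate.greedyErr_antitone hKb u (Nat.zero_le n)).trans hσ0
        have hmax1 : (0:ℝ) < max 1 (n:ℝ) := lt_of_lt_of_le one_pos (le_max_left _ _)
        have h2 : max 1 (n:ℝ) ≤ 4*(L:ℝ) := by
          apply max_le (by linarith)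
          have : (n:ℝ) ≤ 4*(L:ℕ) := by exact_mod_cast hn.le
          simpa using this
        have h3 : (4*(L:ℝ))^(-s) ≤ (max 1 (n:ℝ))^(-s) :=
          GreedyRate.rpow_anti hmax1 h2 hs.le
        have h4 : B * (4*(L:ℝ))^(-s) = 4*C0/γ := by
          rw [hBdef, mul_assoc, ← Real.rpow_add h4Lpos, add_neg_cancel, Real.rpow_zero,
            mul_one]
        have h5 : C0 ≤ 4*C0/γ := by
          rw [le_div_iff₀ hγ0]; nlinarith
        calc greedyErr u K n ≤ C0 := h1
          _ ≤ 4*C0/γ := h5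
          _ = B * (4*(L:ℝ))^(-s) := h4.symm
          _ ≤ B * (max 1 (n:ℝ))^(-s) := mul_le_mul_of_nonneg_left h3 hBpos.le
      · push_neg at hn
        have h2L : 0 < 2*L := by omega
        set m := n / (2*L) with hmdef
        have hm1 : 1 ≤ m := (Nat.one_le_div_iff h2L).mpr (by omega)
        have h2Lm : 2*(L*m) ≤ n := by
          calc 2*(L*m) = m*(2*L) := by ring
            _ ≤ n := Nat.div_mul_le_self n (2*L)
        have hmod : 2*L*m + n % (2*L) = n := Nat.div_add_mod n (2*L)
        have hmlt : n % (2*L) < 2*L := Nat.mod_lt n h2L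
        have h5' : 2*L ≤ 2*L*m := by
          calc 2*L = 2*L*1 := by ring
            _ ≤ 2*L*m := Nat.mul_le_mul_left _ hm1
        have h4n : n < 4*(L*m) := by
          calc n = 2*L*m + n % (2*L) := hmod.symm
            _ < 2*L*m + 2*L := by exact Nat.add_lt_add_left hmlt _
            _ ≤ 2*L*m + 2*L*m := Nat.add_le_add_left h5' _
            _ = 4*(L*m) := by ring
        set P := L*m with hP
        have hP1 : 1 ≤ P := by
          rw [hP]; exact Nat.one_le_iff_ne_zero.mpr (Nat.mul_ne_zero (by omega) (by omega))
        set N := n - P with hNdef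
        have hNsum : N + P = n := by omega
        have hNlt : N < n := by omega
        have hN1 : 1 ≤ N := by omega
        have hnN2 : (n:ℝ) ≤ 2*(N:ℝ) := by
          have : n ≤ 2*N := by omega
          exact_mod_cast this
        have hNpos : (0:ℝ) < (N:ℝ) := by exact_mod_cast hN1
        have hnpos : (0:ℝ) < (n:ℝ) := by
          have : 0 < n := by omega
          exact_mod_cast this
        have hn4Lm : (n:ℝ) < 4*((L:ℝ)*(m:ℝ)) := by
          have : (n:ℝ) < (4*(L*m) : ℕ) := by exact_mod_cast h4n
          simpa [Nat.cast_mul] using this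
        have hmpos : (0:ℝ) < (m:ℝ) := by
          have : (1:ℝ) ≤ (m:ℝ) := by exact_mod_cast hm1
          linarith
        have hrec' := hrec N m hm1
        rw [← hP, hNsum] at hrec'
        have hIH : greedyErr u K N ≤ B * (N:ℝ)^(-s) := by
          have := ih N hNlt
          rwa [max_eq_right (by exact_mod_cast hN1 : (1:ℝ) ≤ (N:ℝ))] at this
        have hterm1 : (2:ℝ)^(-(s+1)) * greedyErr u K N ≤ (B/2) * (n:ℝ)^(-s) := by
          have h6 : (N:ℝ)^(-s) ≤ ((n:ℝ)/2)^(-s) :=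
            GreedyRate.rpow_anti (by linarith) (by linarith) hs.le
          have h7 : ((n:ℝ)/2)^(-s) = (2:ℝ)^s * (n:ℝ)^(-s) := by
            rw [Real.div_rpow hnpos.le (by norm_num : (0:ℝ) ≤ 2),
              Real.rpow_neg (by norm_num : (0:ℝ) ≤ 2), div_inv_eq_mul]
            ring
          have h8 : (2:ℝ)^(-(s+1)) * (2:ℝ)^s = 1/2 := by
            rw [← Real.rpow_add (by norm_num : (0:ℝ) < 2),
              show -(s+1)+s = -1 by ring, Real.rpow_neg_one]
            norm_num
          have h9 : (0:ℝ) < (2:ℝ)^(-(s+1)) := Real.rpow_pos_of_pos (by norm_num) _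
          calc (2:ℝ)^(-(s+1)) * greedyErr u K N
              ≤ (2:ℝ)^(-(s+1)) * (B * (N:ℝ)^(-s)) :=
                mul_le_mul_of_nonneg_left hIH h9.le
            _ ≤ (2:ℝ)^(-(s+1)) * (B * ((2:ℝ)^s * (n:ℝ)^(-s))) := by
                rw [← h7]
                have := mul_le_mul_of_nonneg_left h6 hBpos.le
                exact mul_le_mul_of_nonneg_left this h9.le
            _ = ((2:ℝ)^(-(s+1)) * (2:ℝ)^s) * (B * (n:ℝ)^(-s)) := by ring
            _ = (B/2) * (n:ℝ)^(-s) := by rw [h8]; ring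
        have hterm2 : (2*C0/γ)*(m:ℝ)^(-s) ≤ (B/2) * (n:ℝ)^(-s) := by
          have hq : (0:ℝ) < (n:ℝ)/(4*(L:ℝ)) := by positivity
          have h9 : (m:ℝ)^(-s) ≤ ((n:ℝ)/(4*(L:ℝ)))^(-s) := by
            apply GreedyRate.rpow_anti hq _ hs.le
            rw [div_le_iff₀ (by positivity : (0:ℝ) < 4*(L:ℝ))]
            nlinarith [hn4Lm]
          have h10 : ((n:ℝ)/(4*(L:ℝ)))^(-s) = (4*(L:ℝ))^s * (n:ℝ)^(-s) := by
            rw [Real.div_rpow hnpos.le (by positivity : (0:ℝ) ≤ 4*(L:ℝ)),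
              Real.rpow_neg (by positivity : (0:ℝ) ≤ 4*(L:ℝ)), div_inv_eq_mul]
            ring
          have h11 : (2*C0/γ) * ((4*(L:ℝ))^s) = B/2 := by
            rw [hBdef]; ring
          have hc2 : (0:ℝ) < 2*C0/γ := by positivity
          calc (2*C0/γ)*(m:ℝ)^(-s) ≤ (2*C0/γ)*((4*(L:ℝ))^s * (n:ℝ)^(-s)) := by
                rw [← h10]; exact mul_le_mul_of_nonneg_left h9 hc2.le
            _ = ((2*C0/γ)*((4*(L:ℝ))^s)) * (n:ℝ)^(-s) := by ring
            _ = (B/2) * (n:ℝ)^(-s) := by rw [h11]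
        calc greedyErr u K n
            ≤ (2:ℝ)^(-(s+1)) * greedyErr u K N + (2*C0/γ)*(m:ℝ)^(-s) := hrec'
          _ ≤ (B/2)*(n:ℝ)^(-s) + (B/2)*(n:ℝ)^(-s) := add_le_add hterm1 hterm2
          _ = B * (n:ℝ)^(-s) := by ring
          _ = B * (max 1 (n:ℝ))^(-s) := by
              rw [max_eq_right]
              have : (1:ℝ) ≤ (n:ℝ) := by
                have : 1 ≤ n := by omega
                exact_mod_cast this
              exact this
  -- conclusion
  set x := (B/ε)^(1/s) with hx
  have hxpos : 0 < x := Real.rpow_pos_of_pos (by positivity) _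
  by_cases hx1 : 1 ≤ x
  · set n0 := ⌈x⌉₊ with hn0
    have hn01 : 1 ≤ n0 := Nat.ceil_pos.mpr hxpos
    have hxn0 : x ≤ (n0:ℝ) := Nat.le_ceil x
    have hmem : greedyErr u K n0 ≤ ε := by
      have h12 := hrate n0
      rw [max_eq_right (by exact_mod_cast hn01 : (1:ℝ) ≤ (n0:ℝ))] at h12
      have h13 : ((n0:ℝ))^(-s) ≤ x^(-s) := GreedyRate.rpow_anti hxpos hxn0 hs.le
      have h14 : x^(-s) = ε/B := by
        rw [hx, ← Real.rpow_mul (by positivity : (0:ℝ) ≤ B/ε),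
          show (1/s)*(-s) = -1 by field_simp, Real.rpow_neg_one, inv_div]
      have h15 : B * (n0:ℝ)^(-s) ≤ B * (ε/B) :=
        mul_le_mul_of_nonneg_left (by rw [← h14]; exact h13) hBpos.le
      have h16 : B * (ε/B) = ε := by field_simp
      linarith
    refine ⟨⟨n0, hmem⟩, ?_⟩
    have hsinf : sInf {n | greedyErr u K n ≤ ε} ≤ n0 := Nat.sInf_le hmem
    have hceil : (n0:ℝ) ≤ x + 1 := le_of_lt (Nat.ceil_lt_add_one hxpos.le)
    have hxval : x = B^(1/s) * ε^(-1/s) := by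
      rw [hx, Real.div_rpow hBpos.le hε.le, show (-1)/s = -(1/s) by ring,
        Real.rpow_neg hε.le, div_eq_mul_inv]
    calc ((sInf {n | greedyErr u K n ≤ ε} : ℕ) : ℝ) ≤ (n0:ℝ) := by exact_mod_cast hsinf
      _ ≤ x + 1 := hceil
      _ ≤ 2*x := by linarith
      _ = 2*B^(1/s) * ε^(-1/s) := by rw [hxval]; ring
  · push_neg at hx1
    have hBε : B < ε := by
      by_contra hc
      push_neg at hc
      have h17 : (1:ℝ) ≤ B/ε := (one_le_div hε).mpr hc
      have h18 := Real.one_le_rpow h17 (by positivity : (0:ℝ) ≤ 1/s)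
      rw [← hx] at h18
      linarith
    have hmem0 : greedyErr u K 0 ≤ ε := by linarith [hσ0, hC0B]
    refine ⟨⟨0, hmem0⟩, ?_⟩
    have h19 : sInf {n | greedyErr u K n ≤ ε} = 0 := Nat.sInf_eq_zero.mpr (Or.inl hmem0)
    rw [h19]
    have : (0:ℝ) ≤ 2*B^(1/s) * ε^(-1/s) := by positivity
    simpa using this
end

section
/- Let d ≥ 1 and m ≥ 1 be integers and ν ∈ ℕ^d. Then there exists a downward closed set Λ ⊆ ℕ^d with #Λ ≤ m and ν ∈ Λ if and only if ∏_{j=1}^d (1 + ν_j) ≤ m. In other words, the union of all downward closed subsets of ℕ^d of cardinality at most m equals the hyperbolic cross {ν ∈ ℕ^d : ∏_{j=1}^d (1 + ν_j) ≤ m}. -/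
/-! The downward closure of `ν` is the box `Iic ν`, which has `∏ j, (1 + ν j)` elements and is
contained in every downward closed set containing `ν`; so it is the smallest admissible `Λ`. -/

/-- A finite set `Λ ⊂ ℕ^d` is downward closed if `ν ∈ Λ` and `μ ≤ ν` (componentwise)
imply `μ ∈ Λ`. -/
def DownwardClosed {d : ℕ} (Λ : Finset (Fin d → ℕ)) : Prop :=
  ∀ ν ∈ Λ, ∀ μ : Fin d → ℕ, μ ≤ ν → μ ∈ Λ

theorem Finset.card_Iic_pi_nat {ι : Type*} [Fintype ι] [DecidableEq ι] (ν : ι → ℕ) :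
    (Finset.Iic ν).card = ∏ j, (1 + ν j) := by
  rw [Pi.card_Iic]
  exact Finset.prod_congr rfl fun j _ => by rw [Nat.card_Iic, Nat.add_comm]

theorem downwardClosed_Iic {d : ℕ} (ν : Fin d → ℕ) : DownwardClosed (Finset.Iic ν) :=
  fun _ hx _ hμ => Finset.mem_Iic.mpr (hμ.trans (Finset.mem_Iic.mp hx))

theorem DownwardClosed.Iic_subset {d : ℕ} {Λ : Finset (Fin d → ℕ)} (hΛ : DownwardClosed Λ)
    {ν : Fin d → ℕ} (hν : ν ∈ Λ) : Finset.Iic ν ⊆ Λ :=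
  fun μ hμ => hΛ ν hν μ (Finset.mem_Iic.mp hμ)

theorem statement5_general (d m : ℕ) (ν : Fin d → ℕ) :
    (∃ Λ : Finset (Fin d → ℕ), DownwardClosed Λ ∧ Λ.card ≤ m ∧ ν ∈ Λ) ↔
      ∏ j, (1 + ν j) ≤ m := by
  rw [← Finset.card_Iic_pi_nat]
  constructor
  · rintro ⟨Λ, hΛ, hcard, hν⟩
    exact (Finset.card_le_card (hΛ.Iic_subset hν)).trans hcard
  · intro hcard
    exact ⟨Finset.Iic ν, downwardClosed_Iic ν, hcard, Finset.mem_Iic.mpr le_rfl⟩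

theorem statement5 (d m : ℕ) (hd : 1 ≤ d) (hm : 1 ≤ m) (ν : Fin d → ℕ) :
    (∃ Λ : Finset (Fin d → ℕ), DownwardClosed Λ ∧ Λ.card ≤ m ∧ ν ∈ Λ) ↔
      ∏ j, (1 + ν j) ≤ m :=
  statement5_general d m ν
end

section
/- Let V be a real Hilbert space, f a continuous linear functional on V, δ > 0, and let B̄, B_1, …, B_d be continuous bilinear forms on V such that for every y ∈ [−1,1]^d the bilinear form B_y(v,w) := B̄(v,w) + Σ_{j=1}^d y_j·B_j(v,w) is coercive with constant δ, i.e. B_y(v,v) ≥ δ·‖v‖² for all v ∈ V. Suppose that for each y ∈ [−1,1]^d, u(y) ∈ V satisfies B_y(u(y), w) = f(w) for all w ∈ V. Then for all y, ỹ ∈ [−1,1]^d one has ‖u(y) − u(ỹ)‖ ≤ C·max_{1≤j≤d} |y_j − ỹ_j|, where C = (Σ_{j=1}^d ‖B_j‖)·‖f‖/δ², with ‖B_j‖ the operator norm of the bilinear form B_j. -/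
/-- The parameter cube `Y = [-1,1]^d`. -/
def cube (d : ℕ) : Set (Fin d → ℝ) := Set.univ.pi fun _ => Set.Icc (-1 : ℝ) 1

/-!
Write `B_y := B̄ + Σ_j y_j B_j` and `e := u(y) - u(ỹ)`. Coercivity turns `B_y e = g` into
`‖e‖ ≤ ‖g‖ / δ`. Applied to `B_ỹ (u ỹ) = f` this gives `‖u ỹ‖ ≤ ‖f‖ / δ`, and applied to the
Galerkin-type identity `B_y e = (B_ỹ - B_y) (u ỹ) = Σ_j (ỹ_j - y_j) B_j (u ỹ)` it gives the
Lipschitz bound.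
-/

section

variable {E : Type*} [SeminormedAddCommGroup E] [NormedSpace ℝ E]

theorem norm_le_div_of_coercive {A : E →L[ℝ] E →L[ℝ] ℝ} {g : E →L[ℝ] ℝ} {δ : ℝ} {v : E}
    (hδ : 0 < δ) (hA : ∀ w, δ * ‖w‖ ^ 2 ≤ A w w) (hv : A v = g) : ‖v‖ ≤ ‖g‖ / δ := by
  rw [le_div_iff₀ hδ]
  have hgv : δ * ‖v‖ ^ 2 ≤ ‖g‖ * ‖v‖ :=
    calc δ * ‖v‖ ^ 2 ≤ A v v := hA v
      _ = g v := by rw [hv]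
      _ ≤ ‖g‖ * ‖v‖ := (le_abs_self _).trans (g.le_opNorm v)
  nlinarith [norm_nonneg v, norm_nonneg g]

theorem norm_sum_smul_le_iSup_mul_sum {ι : Type*} [Fintype ι] (c : ι → ℝ) (x : ι → E) :
    ‖∑ j, c j • x j‖ ≤ (⨆ j, |c j|) * ∑ j, ‖x j‖ := by
  have hc : ∀ j, |c j| ≤ ⨆ j, |c j| := le_ciSup (Set.finite_range _).bddAbove
  calc ‖∑ j, c j • x j‖ ≤ ∑ j, ‖c j • x j‖ := norm_sum_le _ _
    _ = ∑ j, |c j| * ‖x j‖ := by simp only [norm_smul, Real.norm_eq_abs]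
    _ ≤ ∑ j, (⨆ j, |c j|) * ‖x j‖ := by gcongr with j; exact hc j
    _ = (⨆ j, |c j|) * ∑ j, ‖x j‖ := (Finset.mul_sum _ _ _).symm

variable {ι : Type*} [Fintype ι]

noncomputable def paramForm (Bbar : E →L[ℝ] E →L[ℝ] ℝ) (B : ι → E →L[ℝ] E →L[ℝ] ℝ)
    (y : ι → ℝ) : E →L[ℝ] E →L[ℝ] ℝ :=
  Bbar + ∑ j, y j • B j

theorem paramForm_apply (Bbar : E →L[ℝ] E →L[ℝ] ℝ) (B : ι → E →L[ℝ] E →L[ℝ] ℝ)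
    (y : ι → ℝ) (v w : E) :
    paramForm Bbar B y v w = Bbar v w + ∑ j, y j * B j v w := by
  simp [paramForm]

theorem paramForm_sub_paramForm (Bbar : E →L[ℝ] E →L[ℝ] ℝ) (B : ι → E →L[ℝ] E →L[ℝ] ℝ)
    (y y' : ι → ℝ) : paramForm Bbar B y - paramForm Bbar B y' = ∑ j, (y j - y' j) • B j := by
  ext v w
  simp [paramForm_apply, sub_mul]

end

theorem statement17_general {V : Type*} [NormedAddCommGroup V] [InnerProductSpace ℝ V]
    (d : ℕ) (f : V →L[ℝ] ℝ) (δ : ℝ) (hδ : 0 < δ)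
    (Bbar : V →L[ℝ] V →L[ℝ] ℝ) (B : Fin d → (V →L[ℝ] V →L[ℝ] ℝ))
    (hcoer : ∀ y ∈ cube d, ∀ v : V, δ * ‖v‖ ^ 2 ≤ Bbar v v + ∑ j, y j * B j v v)
    (u : (Fin d → ℝ) → V)
    (hu : ∀ y ∈ cube d, ∀ w : V, Bbar (u y) w + ∑ j, y j * B j (u y) w = f w) :
    ∀ y ∈ cube d, ∀ ytil ∈ cube d,
      ‖u y - u ytil‖ ≤
        ((∑ j, ‖B j‖) * ‖f‖ / δ ^ 2) * ⨆ j : Fin d, |y j - ytil j| := by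
  intro y hy ytil hytil
  have hcoerForm : ∀ y ∈ cube d, ∀ v, δ * ‖v‖ ^ 2 ≤ paramForm Bbar B y v v := fun y hy v => by
    simpa only [paramForm_apply] using hcoer y hy v
  have hsol : ∀ y ∈ cube d, paramForm Bbar B y (u y) = f := fun y hy => by
    ext w; simpa only [paramForm_apply] using hu y hy w
  have hutil : ‖u ytil‖ ≤ ‖f‖ / δ :=
    norm_le_div_of_coercive hδ (hcoerForm ytil hytil) (hsol ytil hytil)
  have herr : paramForm Bbar B y (u y - u ytil) = (∑ j, (ytil j - y j) • B j) (u ytil) := by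
    rw [map_sub, hsol y hy, ← hsol ytil hytil, ← paramForm_sub_paramForm Bbar B ytil y]
    rfl
  calc ‖u y - u ytil‖ ≤ ‖(∑ j, (ytil j - y j) • B j) (u ytil)‖ / δ :=
        norm_le_div_of_coercive hδ (hcoerForm y hy) herr
    _ ≤ ‖∑ j, (ytil j - y j) • B j‖ * ‖u ytil‖ / δ := by
        gcongr; exact ContinuousLinearMap.le_opNorm _ _
    _ ≤ ((⨆ j, |ytil j - y j|) * ∑ j, ‖B j‖) * (‖f‖ / δ) / δ := by
        gcongr
        · exact mul_nonneg (Real.iSup_nonneg fun _ => abs_nonneg _) (by positivity)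
        · exact norm_sum_smul_le_iSup_mul_sum (fun j => ytil j - y j) B
    _ = ((∑ j, ‖B j‖) * ‖f‖ / δ ^ 2) * ⨆ j, |y j - ytil j| := by
        simp only [abs_sub_comm (ytil _)]
        field_simp

theorem statement17 {V : Type*} [NormedAddCommGroup V] [InnerProductSpace ℝ V] [CompleteSpace V]
    (d : ℕ) (hd : 0 < d) (f : V →L[ℝ] ℝ) (δ : ℝ) (hδ : 0 < δ)
    (Bbar : V →L[ℝ] V →L[ℝ] ℝ) (B : Fin d → (V →L[ℝ] V →L[ℝ] ℝ))
    (hcoer : ∀ y ∈ cube d, ∀ v : V, δ * ‖v‖ ^ 2 ≤ Bbar v v + ∑ j, y j * B j v v)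
    (u : (Fin d → ℝ) → V)
    (hu : ∀ y ∈ cube d, ∀ w : V, Bbar (u y) w + ∑ j, y j * B j (u y) w = f w) :
    ∀ y ∈ cube d, ∀ ytil ∈ cube d,
      ‖u y - u ytil‖ ≤
        ((∑ j, ‖B j‖) * ‖f‖ / δ ^ 2) * ⨆ j : Fin d, |y j - ytil j| :=
  statement17_general d f δ hδ Bbar B hcoer u hu
end
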